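/- Uniform moment bound from linear moment growth plus algebraic L¹ relaxation. Let N ≥ 1, s > 2, and let M : ℝ^N → [0,∞) be measurable with ‖M‖_{L¹_{2s}} < ∞. Suppose g : [0,∞) → (measurable functions ℝ^N → [0,∞)) satisfies, for some constants C₀, C₁ > 0 and all t ≥ 0: ‖g(t)‖_{L¹_{2s}} ≤ C₀(1+t) and ‖g(t) − M‖_{L¹} ≤ C₁(1+t)^{−1}. Then for all t ≥ 0: ‖g(t)‖_{L¹_s} ≤ ‖M‖_{L¹_s} + C₁^{1/2} (C₀ + ‖M‖_{L¹_{2s}})^{1/2}; in particular sup_{t ≥ 0} ‖g(t)‖_{L¹_s} < ∞. -/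

import Mathlib

open MeasureTheory Real ENNReal

noncomputable section

/-- Euclidean space `ℝ^N`. -/
abbrev Rn (N : ℕ) := EuclideanSpace ℝ (Fin N)

/-- Weighted norm `‖f‖_{L¹_s} = ∫ |f(v)| (1+|v|²)^{s/2} dv`, valued in `[0,∞]`. -/
def L1s (N : ℕ) (s : ℝ) (f : Rn N → ℝ) : ℝ≥0∞ :=
  ∫⁻ v : Rn N, ENNReal.ofReal (|f v| * (1 + ‖v‖ ^ 2) ^ (s / 2))

/-! Write `g(t) = M + (g(t) - M)`. By Cauchy–Schwarz, the `L¹_s` norm of the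
difference is at most the geometric mean of its `L¹` and `L¹_{2s}` norms, which are bounded by
`C₁/(1+t)` and `C₀(1+t) + ‖M‖_{L¹_{2s}}`; the factors `1+t` cancel in the product. -/

namespace L1s

variable {N : ℕ}

theorem measurable_weight (s : ℝ) :
    Measurable fun v : Rn N => (1 + ‖v‖ ^ 2) ^ (s / 2) := by
  fun_prop

theorem le_add_of_abs_le_add (s : ℝ) {f f₁ f₂ : Rn N → ℝ} (hf₁ : Measurable f₁)
    (hle : ∀ v, |f v| ≤ |f₁ v| + |f₂ v|) :
    L1s N s f ≤ L1s N s f₁ + L1s N s f₂ := by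
  unfold L1s
  rw [← lintegral_add_left (f := fun v => ENNReal.ofReal (|f₁ v| * (1 + ‖v‖ ^ 2) ^ (s / 2)))
    (hf₁.abs.mul (measurable_weight s)).ennreal_ofReal]
  refine lintegral_mono fun v => ?_
  rw [← ENNReal.ofReal_add (by positivity) (by positivity), ← add_mul]
  gcongr
  exact hle v

theorem mono_exponent {s s' : ℝ} (hss' : s ≤ s') (f : Rn N → ℝ) :
    L1s N s f ≤ L1s N s' f := by
  refine lintegral_mono fun v => ?_
  gcongr
  exact le_add_of_nonneg_right (by positivity)

theorem le_rpow_mul_rpow {p q : ℝ} (hp : 0 ≤ p) (hq : 0 ≤ q) (hpq : p + q = 1) (a b : ℝ)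
    {f : Rn N → ℝ} (hf : Measurable f) :
    L1s N (p * a + q * b) f ≤ L1s N a f ^ p * L1s N b f ^ q := by
  have hmeas (c : ℝ) : Measurable fun v : Rn N =>
      ENNReal.ofReal (|f v| * (1 + ‖v‖ ^ 2) ^ (c / 2)) :=
    (hf.abs.mul (measurable_weight c)).ennreal_ofReal
  refine le_trans (le_of_eq (lintegral_congr fun v => ?_))
    (ENNReal.lintegral_mul_norm_pow_le (hmeas a).aemeasurable (hmeas b).aemeasurable hp hq hpq)
  have hW : 0 < 1 + ‖v‖ ^ 2 := by positivity
  rw [ENNReal.ofReal_rpow_of_nonneg (by positivity) hp,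
    ENNReal.ofReal_rpow_of_nonneg (by positivity) hq, ← ENNReal.ofReal_mul (by positivity),
    Real.mul_rpow (abs_nonneg _) (by positivity), Real.mul_rpow (abs_nonneg _) (by positivity),
    ← Real.rpow_mul hW.le, ← Real.rpow_mul hW.le]
  congr 1
  have hf_split : |f v| = |f v| ^ p * |f v| ^ q := by
    rw [← Real.rpow_add' (abs_nonneg _) (by simp [hpq]), hpq, Real.rpow_one]
  rw [show (p * a + q * b) / 2 = a / 2 * p + b / 2 * q by ring, Real.rpow_add hW]
  nth_rw 1 [hf_split]
  ring

theorem le_sqrt_mul_sqrt (s : ℝ) {f : Rn N → ℝ} (hf : Measurable f) :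
    L1s N s f ≤ L1s N 0 f ^ (1 / 2 : ℝ) * L1s N (2 * s) f ^ (1 / 2 : ℝ) := by
  simpa [← mul_assoc] using
    le_rpow_mul_rpow (p := 1 / 2) (q := 1 / 2) (by norm_num) (by norm_num) (by norm_num) 0 (2 * s) hf

end L1s

theorem ENNReal.inv_mul_mul_add_le {c L x : ℝ≥0∞} (hx : 1 ≤ x) (hx_top : x ≠ ⊤) :
    x⁻¹ * (c * x + L) ≤ c + L := by
  rw [mul_add, mul_comm c, ← mul_assoc,
    ENNReal.inv_mul_cancel (zero_lt_one.trans_le hx).ne' hx_top, one_mul]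
  gcongr
  exact mul_le_of_le_one_left' (ENNReal.inv_le_one.mpr hx)

theorem L1s.le_add_of_growth_relaxation {N : ℕ} (s : ℝ) {f M : Rn N → ℝ}
    (hf : Measurable f) (hM : Measurable M) {c₀ c₁ x : ℝ≥0∞} (hx : 1 ≤ x) (hx_top : x ≠ ⊤)
    (hgrow : L1s N (2 * s) f ≤ c₀ * x) (hrelax : L1s N 0 (fun v => f v - M v) ≤ c₁ * x⁻¹) :
    L1s N s f ≤ L1s N s M + c₁ ^ (1 / 2 : ℝ) * (c₀ + L1s N (2 * s) M) ^ (1 / 2 : ℝ) := by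
  set h : Rn N → ℝ := fun v => f v - M v
  have hsplit : L1s N s f ≤ L1s N s M + L1s N s h :=
    L1s.le_add_of_abs_le_add s hM fun v => by simpa [h] using abs_add_le (M v) (f v - M v)
  have hh_grow : L1s N (2 * s) h ≤ c₀ * x + L1s N (2 * s) M :=
    (L1s.le_add_of_abs_le_add _ hf fun v => abs_sub _ _).trans (by gcongr)
  have hproduct : L1s N 0 h * L1s N (2 * s) h ≤ c₁ * (c₀ + L1s N (2 * s) M) :=
    calc L1s N 0 h * L1s N (2 * s) h ≤ c₁ * (x⁻¹ * (c₀ * x + L1s N (2 * s) M)) := by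
          rw [← mul_assoc]; exact mul_le_mul' hrelax hh_grow
      _ ≤ c₁ * (c₀ + L1s N (2 * s) M) := by gcongr; exact ENNReal.inv_mul_mul_add_le hx hx_top
  calc L1s N s f ≤ L1s N s M + L1s N s h := hsplit
    _ ≤ L1s N s M + (L1s N 0 h * L1s N (2 * s) h) ^ (1 / 2 : ℝ) := by
        rw [ENNReal.mul_rpow_of_nonneg _ _ (by norm_num)]
        gcongr
        exact L1s.le_sqrt_mul_sqrt s (hf.sub hM)
    _ ≤ L1s N s M + c₁ ^ (1 / 2 : ℝ) * (c₀ + L1s N (2 * s) M) ^ (1 / 2 : ℝ) := by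
        rw [← ENNReal.mul_rpow_of_nonneg _ _ (by norm_num : (0 : ℝ) ≤ 1 / 2)]
        gcongr

theorem uniform_moment_from_growth_and_relaxation_general
    (N : ℕ) (s : ℝ) (hs : 2 < s)
    (M : Rn N → ℝ) (hMmeas : Measurable M)
    (hMfin : L1s N (2 * s) M < ⊤)
    (g : ℝ → Rn N → ℝ) (hgmeas : ∀ t : ℝ, 0 ≤ t → Measurable (g t))
    (C₀ C₁ : ℝ)
    (hgrow : ∀ t : ℝ, 0 ≤ t → L1s N (2 * s) (g t) ≤ ENNReal.ofReal (C₀ * (1 + t)))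
    (hrelax : ∀ t : ℝ, 0 ≤ t →
      L1s N 0 (fun v => g t v - M v) ≤ ENNReal.ofReal (C₁ * (1 + t)⁻¹)) :
    (∀ t : ℝ, 0 ≤ t →
      L1s N s (g t) ≤ L1s N s M +
        ENNReal.ofReal C₁ ^ (1/2 : ℝ) *
          (ENNReal.ofReal C₀ + L1s N (2 * s) M) ^ (1/2 : ℝ)) ∧
    ∃ C : ℝ≥0∞, C < ⊤ ∧ ∀ t : ℝ, 0 ≤ t → L1s N s (g t) ≤ C := by
  have hbound : ∀ t : ℝ, 0 ≤ t →
      L1s N s (g t) ≤ L1s N s M +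
        ENNReal.ofReal C₁ ^ (1/2 : ℝ) * (ENNReal.ofReal C₀ + L1s N (2 * s) M) ^ (1/2 : ℝ) := by
    intro t ht
    refine L1s.le_add_of_growth_relaxation s (hgmeas t ht) hMmeas
      (x := ENNReal.ofReal (1 + t)) (by simp [ht]) ENNReal.ofReal_ne_top ?_ ?_
    · rw [← ENNReal.ofReal_mul' (by positivity)]
      exact hgrow t ht
    · rw [← ENNReal.ofReal_inv_of_pos (by positivity), ← ENNReal.ofReal_mul' (by positivity)]
      exact hrelax t ht
  refine ⟨hbound, _, ?_, hbound⟩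
  have hM_s : L1s N s M < ⊤ := (L1s.mono_exponent (by linarith) M).trans_lt hMfin
  finiteness

/-- **Uniform moment bound from linear moment growth plus algebraic `L¹` relaxation**:
if `‖g(t)‖_{L¹_{2s}} ≤ C₀(1+t)` and `‖g(t) - M‖_{L¹} ≤ C₁(1+t)⁻¹`, then
`‖g(t)‖_{L¹_s} ≤ ‖M‖_{L¹_s} + C₁^{1/2} (C₀ + ‖M‖_{L¹_{2s}})^{1/2}` for all `t ≥ 0`;
in particular `sup_{t ≥ 0} ‖g(t)‖_{L¹_s} < ∞`. -/
theorem uniform_moment_from_growth_and_relaxation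
    (N : ℕ) (hN : 1 ≤ N) (s : ℝ) (hs : 2 < s)
    (M : Rn N → ℝ) (hMmeas : Measurable M) (hMpos : ∀ v, 0 ≤ M v)
    (hMfin : L1s N (2 * s) M < ⊤)
    (g : ℝ → Rn N → ℝ) (hgmeas : ∀ t : ℝ, 0 ≤ t → Measurable (g t))
    (hgpos : ∀ t : ℝ, 0 ≤ t → ∀ v, 0 ≤ g t v)
    (C₀ C₁ : ℝ) (hC₀ : 0 < C₀) (hC₁ : 0 < C₁)
    (hgrow : ∀ t : ℝ, 0 ≤ t → L1s N (2 * s) (g t) ≤ ENNReal.ofReal (C₀ * (1 + t)))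
    (hrelax : ∀ t : ℝ, 0 ≤ t →
      L1s N 0 (fun v => g t v - M v) ≤ ENNReal.ofReal (C₁ * (1 + t)⁻¹)) :
    (∀ t : ℝ, 0 ≤ t →
      L1s N s (g t) ≤ L1s N s M +
        ENNReal.ofReal C₁ ^ (1/2 : ℝ) *
          (ENNReal.ofReal C₀ + L1s N (2 * s) M) ^ (1/2 : ℝ)) ∧
    ∃ C : ℝ≥0∞, C < ⊤ ∧ ∀ t : ℝ, 0 ≤ t → L1s N s (g t) ≤ C :=
  uniform_moment_from_growth_and_relaxation_general N s hs M hMmeas hMfin g hgmeas C₀ C₁ hgrow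
    hrelax
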